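/- arXiv:2601.18741 — 3 statements merged into one kernel-verified Lean document; each statement's English description precedes it below -/
import Mathlib

section
/- Let X be a compact metrizable topological space, let U ⊆ X be a dense open subset, and let d° : U × U → ℝ be a continuous function (with respect to the product of the subspace topologies) which is nonnegative, symmetric, satisfies the triangle inequality, and satisfies d°(x,x) = 0 for all x ∈ U. Assume that for every point x ∈ X \ U and every ε > 0 there exists an open set V ⊆ X with x ∈ V such that d°(y,z) < ε for all y, z ∈ V ∩ U. Then there exists a unique continuous function d : X × X → ℝ whose restriction to U × U equals d°; moreover d is nonnegative, symmetric, and satisfies the triangle inequality. -/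
open Set

/-- A continuous pseudo-distance `d°` on a dense open subset `U` of a compact metrizable
space `X`, whose punctured neighbourhoods of points of `X \ U` have small `d°`-diameter,
extends uniquely to a continuous function `d` on `X × X` which is again nonnegative,
symmetric and satisfies the triangle inequality. -/
theorem conical_distance_extends_continuously
    {X : Type*} [TopologicalSpace X] [CompactSpace X] [TopologicalSpace.MetrizableSpace X]
    (U : Set X) (hUo : IsOpen U) (hUd : Dense U)
    (d0 : X → X → ℝ)
    (hcont : ContinuousOn (fun p : X × X => d0 p.1 p.2) (U ×ˢ U))
    (hnonneg : ∀ x ∈ U, ∀ y ∈ U, 0 ≤ d0 x y)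
    (hsymm : ∀ x ∈ U, ∀ y ∈ U, d0 x y = d0 y x)
    (htri : ∀ x ∈ U, ∀ y ∈ U, ∀ z ∈ U, d0 x z ≤ d0 x y + d0 y z)
    (hrefl : ∀ x ∈ U, d0 x x = 0)
    (hsmall : ∀ x ∈ Uᶜ, ∀ ε : ℝ, 0 < ε → ∃ V : Set X, IsOpen V ∧ x ∈ V ∧
      ∀ y ∈ V ∩ U, ∀ z ∈ V ∩ U, d0 y z < ε) :
    ∃ d : X → X → ℝ,
      (Continuous (fun p : X × X => d p.1 p.2) ∧
        (∀ x ∈ U, ∀ y ∈ U, d x y = d0 x y)) ∧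
      (∀ x y, 0 ≤ d x y) ∧
      (∀ x y, d x y = d y x) ∧
      (∀ x y z, d x z ≤ d x y + d y z) ∧
      (∀ d' : X → X → ℝ,
        (Continuous (fun p : X × X => d' p.1 p.2) ∧
          (∀ x ∈ U, ∀ y ∈ U, d' x y = d0 x y)) → d' = d) := by
  classical
  open Filter Topology in
  set S : Set (X × X) := U ×ˢ U with hS
  have hSo : IsOpen S := hUo.prod hUo
  have hSd : Dense S := hUd.prod hUd
  set g : X × X → ℝ := fun p => d0 p.1 p.2 with hg
  -- difference bound from the triangle inequality
  have hdiff : ∀ p ∈ S, ∀ q ∈ S, g p - g q ≤ d0 p.1 q.1 + d0 p.2 q.2 := by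
    rintro ⟨y1, y2⟩ ⟨hy1, hy2⟩ ⟨z1, z2⟩ ⟨hz1, hz2⟩
    have h1 := htri y1 hy1 z1 hz1 y2 hy2
    have h2 := htri z1 hz1 z2 hz2 y2 hy2
    have h3 := hsymm z2 hz2 y2 hy2
    simp only [hg]
    linarith
  -- small diameter neighbourhoods at every point of `X`
  have hsmall' : ∀ a : X, ∀ ε : ℝ, 0 < ε → ∃ V : Set X, IsOpen V ∧ a ∈ V ∧
      ∀ y ∈ V ∩ U, ∀ z ∈ V ∩ U, d0 y z < ε := by
    intro a ε hε
    by_cases ha : a ∈ U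
    · have hca : ContinuousAt g (a, a) :=
        hcont.continuousAt (hSo.mem_nhds ⟨ha, ha⟩)
      have hlt : g (a, a) < ε := by
        simpa [hg, hrefl a ha] using hε
      have hmem : g ⁻¹' Set.Iio ε ∈ 𝓝 (a, a) := hca (Iio_mem_nhds hlt)
      rw [mem_nhds_prod_iff] at hmem
      obtain ⟨u, hu, v, hv, huv⟩ := hmem
      obtain ⟨u', hu'sub, hu'o, hau'⟩ := mem_nhds_iff.1 hu
      obtain ⟨v', hv'sub, hv'o, hav'⟩ := mem_nhds_iff.1 hv
      refine ⟨u' ∩ v', hu'o.inter hv'o, ⟨hau', hav'⟩, ?_⟩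
      rintro y ⟨⟨hyu, hyv⟩, -⟩ z ⟨⟨hzu, hzv⟩, -⟩
      have : (y, z) ∈ g ⁻¹' Set.Iio ε := huv ⟨hu'sub hyu, hv'sub hzv⟩
      simpa [hg] using this
    · exact hsmall a ha ε hε
  -- existence of limits along `𝓝[S] p`
  have hlim : ∀ p : X × X, ∃ c : ℝ, Tendsto g (𝓝[S] p) (𝓝 c) := by
    intro p
    have hne : (𝓝[S] p).NeBot :=
      mem_closure_iff_nhdsWithin_neBot.1 (hSd p)
    have hC : Cauchy (Filter.map g (𝓝[S] p)) := by
      rw [Metric.cauchy_iff]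
      refine ⟨hne.map _, fun ε hε => ?_⟩
      obtain ⟨V1, hV1o, hV1m, hV1⟩ := hsmall' p.1 (ε / 2) (by linarith)
      obtain ⟨V2, hV2o, hV2m, hV2⟩ := hsmall' p.2 (ε / 2) (by linarith)
      refine ⟨g '' (S ∩ V1 ×ˢ V2), Filter.image_mem_map ?_, ?_⟩
      · exact inter_mem_nhdsWithin S ((hV1o.prod hV2o).mem_nhds ⟨hV1m, hV2m⟩)
      rintro x ⟨q, ⟨hqS, hq1, hq2⟩, rfl⟩ y ⟨r, ⟨hrS, hr1, hr2⟩, rfl⟩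
      have h1 : d0 q.1 r.1 < ε / 2 := hV1 q.1 ⟨hq1, hqS.1⟩ r.1 ⟨hr1, hrS.1⟩
      have h2 : d0 q.2 r.2 < ε / 2 := hV2 q.2 ⟨hq2, hqS.2⟩ r.2 ⟨hr2, hrS.2⟩
      have h1' : d0 r.1 q.1 < ε / 2 := by
        rwa [hsymm r.1 hrS.1 q.1 hqS.1]
      have h2' : d0 r.2 q.2 < ε / 2 := by
        rwa [hsymm r.2 hrS.2 q.2 hqS.2]
      have hd1 := hdiff q hqS r hrS
      have hd2 := hdiff r hrS q hqS
      rw [Real.dist_eq, abs_lt]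
      constructor <;> linarith
    obtain ⟨c, hc⟩ := CompleteSpace.complete hC
    exact ⟨c, hc⟩
  -- the dense inducing inclusion of `S`
  have hdi : IsDenseInducing ((↑) : S → X × X) :=
    ⟨IsInducing.subtypeVal, hSd.denseRange_val⟩
  have hgS : Continuous (fun q : S => g (q : X × X)) :=
    hcont.restrict
  have hlim' : ∀ p : X × X, ∃ c : ℝ,
      Tendsto (fun q : S => g (q : X × X)) (Filter.comap ((↑) : S → X × X) (𝓝 p)) (𝓝 c) := by
    intro p
    obtain ⟨c, hc⟩ := hlim p
    refine ⟨c, ?_⟩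
    have : Filter.map ((↑) : S → X × X) (Filter.comap ((↑) : S → X × X) (𝓝 p)) = 𝓝[S] p := by
      rw [Filter.map_comap, Subtype.range_val]
      rfl
    rw [show (fun q : S => g (q : X × X)) = g ∘ ((↑) : S → X × X) from rfl,
      ← Filter.tendsto_map'_iff, this]
    exact hc
  set D : X × X → ℝ := hdi.extend (fun q : S => g (q : X × X)) with hD
  have hDcont : Continuous D := hdi.continuous_extend hlim'
  have hDeq : ∀ q : S, D (q : X × X) = g (q : X × X) := fun q => hdi.extend_eq hgS q
  have hDS : ∀ p ∈ S, D p = g p := fun p hp => hDeq ⟨p, hp⟩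
  refine ⟨fun a b => D (a, b), ⟨?_, ?_⟩, ?_, ?_, ?_, ?_⟩
  · exact hDcont
  · intro x hx y hy
    exact hDS (x, y) ⟨hx, hy⟩
  · -- nonnegativity
    intro x y
    have hcl : IsClosed {p : X × X | 0 ≤ D p} := isClosed_le continuous_const hDcont
    have hsub : S ⊆ {p : X × X | 0 ≤ D p} := by
      intro p hp
      have := hnonneg p.1 hp.1 p.2 hp.2
      simpa [hDS p hp, hg] using this
    have : closure S ⊆ {p : X × X | 0 ≤ D p} := hcl.closure_subset_iff.2 hsub
    exact this (by rw [hSd.closure_eq]; trivial)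
  · -- symmetry
    intro x y
    have hcl : IsClosed {p : X × X | D p = D p.swap} :=
      isClosed_eq hDcont (hDcont.comp continuous_swap)
    have hsub : S ⊆ {p : X × X | D p = D p.swap} := by
      rintro ⟨a, b⟩ ⟨ha, hb⟩
      have h1 : D (a, b) = d0 a b := hDS (a, b) ⟨ha, hb⟩
      have h2 : D (b, a) = d0 b a := hDS (b, a) ⟨hb, ha⟩
      simp only [mem_setOf_eq, Prod.swap, h1, h2]
      exact hsymm a ha b hb
    have : closure S ⊆ {p : X × X | D p = D p.swap} := hcl.closure_subset_iff.2 hsub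
    exact this (by rw [hSd.closure_eq]; trivial)
  · -- triangle inequality
    intro x y z
    have hcl : IsClosed {t : X × X × X | D (t.1, t.2.2) ≤ D (t.1, t.2.1) + D (t.2.1, t.2.2)} := by
      apply isClosed_le
      · exact hDcont.comp ((continuous_fst).prodMk (continuous_snd.comp continuous_snd))
      · exact (hDcont.comp ((continuous_fst).prodMk
          (continuous_fst.comp continuous_snd))).add
          (hDcont.comp ((continuous_fst.comp continuous_snd).prodMk
            (continuous_snd.comp continuous_snd)))
    have hT : Dense (U ×ˢ (U ×ˢ U) : Set (X × X × X)) := hUd.prod (hUd.prod hUd)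
    have hsub : (U ×ˢ (U ×ˢ U) : Set (X × X × X)) ⊆
        {t : X × X × X | D (t.1, t.2.2) ≤ D (t.1, t.2.1) + D (t.2.1, t.2.2)} := by
      rintro ⟨a, b, c⟩ ⟨ha, hb, hc⟩
      have h1 : D (a, c) = d0 a c := hDS (a, c) ⟨ha, hc⟩
      have h2 : D (a, b) = d0 a b := hDS (a, b) ⟨ha, hb⟩
      have h3 : D (b, c) = d0 b c := hDS (b, c) ⟨hb, hc⟩
      simp only [mem_setOf_eq, h1, h2, h3]
      exact htri a ha b hb c hc
    have : closure (U ×ˢ (U ×ˢ U) : Set (X × X × X)) ⊆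
        {t : X × X × X | D (t.1, t.2.2) ≤ D (t.1, t.2.1) + D (t.2.1, t.2.2)} :=
      hcl.closure_subset_iff.2 hsub
    exact this (show ((x, y, z) : X × X × X) ∈ _ from by rw [hT.closure_eq]; trivial)
  · -- uniqueness
    rintro d' ⟨hd'cont, hd'eq⟩
    have heq : (fun p : X × X => d' p.1 p.2) = D := by
      apply Continuous.ext_on hSd hd'cont hDcont
      rintro ⟨a, b⟩ ⟨ha, hb⟩
      have : D (a, b) = d0 a b := hDS (a, b) ⟨ha, hb⟩
      simp only [this]
      exact hd'eq a ha b hb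
    funext a b
    exact congrFun heq (a, b)
end

section
/- Fix β > 0 and define F : ℝ × ℝ → ℂ by F(r, θ) = (β r)^{1/β} · (cos θ + i sin θ). Then for every r > 0, every θ ∈ ℝ, and every (a, b) ∈ ℝ × ℝ, the map F is differentiable at (r, θ) and ‖F(r,θ)‖^{2β − 2} · ‖(D F)_{(r,θ)}(a, b)‖² = a² + β² r² b², where (DF)_{(r,θ)} denotes the Fréchet derivative of F at (r, θ) and ‖·‖ the Euclidean (complex modulus) norm on ℂ. -/
/-!
Writing `F(r, θ) = ρ(r) e^{iθ}` with `ρ(r) = (βr)^{1/β}`, the differential of any such polar map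
sends `(a, b)` to `e^{iθ}(ρ'(r) a + i ρ(r) b)`, so it pulls `|dz|²` back to `ρ'² dr² + ρ² dθ²`.
Here `ρ' = ρ / (βr)` and `ρ^{2β} = (βr)²`, so the conformal factor `ρ^{2β-2} = (βr)² / ρ²`
turns this into `dr² + β²r² dθ²`.
-/

open Complex

noncomputable def polarMap (ρ : ℝ → ℝ) (p : ℝ × ℝ) : ℂ :=
  (ρ p.1 : ℂ) * exp (p.2 * I)

lemma norm_polarMap (ρ : ℝ → ℝ) (r θ : ℝ) : ‖polarMap ρ (r, θ)‖ = |ρ r| := by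
  rw [polarMap, norm_mul, norm_exp_ofReal_mul_I, mul_one, norm_real, Real.norm_eq_abs]

lemma hasFDerivAt_polarMap {ρ : ℝ → ℝ} {ρ' r : ℝ} (θ : ℝ) (hρ : HasDerivAt ρ ρ' r) :
    HasFDerivAt (polarMap ρ)
      ((ContinuousLinearMap.fst ℝ ℝ ℝ).smulRight ((ρ' : ℂ) * exp (θ * I)) +
        (ContinuousLinearMap.snd ℝ ℝ ℝ).smulRight ((ρ r : ℂ) * exp (θ * I) * I)) (r, θ) := by
  have hradial : HasFDerivAt (fun p : ℝ × ℝ => (ρ p.1 : ℂ))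
      ((ContinuousLinearMap.fst ℝ ℝ ℝ).smulRight (ρ' : ℂ)) (r, θ) :=
    hρ.ofReal_comp.hasFDerivAt.comp (r, θ) (ContinuousLinearMap.fst ℝ ℝ ℝ).hasFDerivAt
  have hangular : HasFDerivAt (fun p : ℝ × ℝ => exp (p.2 * I))
      ((ContinuousLinearMap.snd ℝ ℝ ℝ).smulRight (exp (θ * I) * I)) (r, θ) := by
    have hexp : HasDerivAt (fun z : ℂ => exp (z * I)) (exp (θ * I) * I) θ :=
      (hasDerivAt_exp _).comp _ ((hasDerivAt_id _).mul_const I |>.congr_deriv (one_mul I))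
    exact hexp.comp_ofReal.hasFDerivAt.comp (r, θ) (ContinuousLinearMap.snd ℝ ℝ ℝ).hasFDerivAt
  refine (hradial.mul hangular).congr_fderiv (ContinuousLinearMap.ext fun p => ?_)
  simp only [add_apply, smul_apply, ContinuousLinearMap.smulRight_apply,
    ContinuousLinearMap.coe_fst', ContinuousLinearMap.coe_snd', real_smul, smul_eq_mul]
  ring

lemma sq_norm_fderiv_polarMap_apply {ρ : ℝ → ℝ} {ρ' r : ℝ} (θ a b : ℝ)
    (hρ : HasDerivAt ρ ρ' r) :
    ‖fderiv ℝ (polarMap ρ) (r, θ) (a, b)‖ ^ 2 = (ρ' * a) ^ 2 + (ρ r * b) ^ 2 := by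
  have hval : fderiv ℝ (polarMap ρ) (r, θ) (a, b) =
      exp (θ * I) * (((ρ' * a : ℝ) : ℂ) + ((ρ r * b : ℝ) : ℂ) * I) := by
    rw [(hasFDerivAt_polarMap θ hρ).fderiv]
    simp only [add_apply, ContinuousLinearMap.smulRight_apply, ContinuousLinearMap.coe_fst',
      ContinuousLinearMap.coe_snd', real_smul, ofReal_mul]
    ring
  rw [hval, norm_mul, norm_exp_ofReal_mul_I, one_mul, Complex.sq_norm, normSq_add_mul_I]

lemma hasDerivAt_rpow_one_div_mul {β r : ℝ} (hβ : β ≠ 0) (hβr : 0 < β * r) :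
    HasDerivAt (fun x => (β * x) ^ (1 / β)) ((β * r) ^ (1 / β) / (β * r)) r := by
  have h := ((Real.hasDerivAt_rpow_const (p := 1 / β) (Or.inl hβr.ne')).comp r
    ((hasDerivAt_id r).const_mul β))
  refine h.congr_deriv ?_
  rw [Real.rpow_sub hβr, Real.rpow_one]
  field_simp

/-- The polar change of coordinates for the 2-cone of angle `2πβ`: the pullback of the
conformally flat metric `|z|^{2β−2}|dz|²` under `F(r,θ) = (βr)^{1/β}(cos θ + i sin θ)`
is `dr² + β²r²dθ²`. -/
theorem cone_metric_polar_coordinates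
    (β : ℝ) (hβ : 0 < β)
    (F : ℝ × ℝ → ℂ)
    (hF : ∀ p : ℝ × ℝ, F p =
      (((β * p.1) ^ (1 / β : ℝ) : ℝ) : ℂ) *
        (((Real.cos p.2 : ℝ) : ℂ) + ((Real.sin p.2 : ℝ) : ℂ) * Complex.I)) :
    ∀ (r θ : ℝ), 0 < r → ∀ a b : ℝ,
      DifferentiableAt ℝ F (r, θ) ∧
      ‖F (r, θ)‖ ^ (2 * β - 2 : ℝ) * ‖fderiv ℝ F (r, θ) (a, b)‖ ^ 2
        = a ^ 2 + β ^ 2 * r ^ 2 * b ^ 2 := by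
  intro r θ hr a b
  have hβr : 0 < β * r := mul_pos hβ hr
  have hF_polar : F = polarMap (fun x => (β * x) ^ (1 / β)) := by
    ext1 p
    rw [hF, polarMap, exp_mul_I, ofReal_cos, ofReal_sin]
  have hρ := hasDerivAt_rpow_one_div_mul hβ.ne' hβr
  refine ⟨hF_polar ▸ (hasFDerivAt_polarMap θ hρ).differentiableAt, ?_⟩
  rw [hF_polar, norm_polarMap, sq_norm_fderiv_polarMap_apply θ a b hρ]
  set s := (β * r) ^ (1 / β) with hs
  have hs_pos : 0 < s := Real.rpow_pos_of_pos hβr _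
  have hs_rpow : s ^ (2 * β) = (β * r) ^ 2 := by
    rw [hs, ← Real.rpow_mul hβr.le, one_div_mul_eq_div, mul_div_cancel_right₀ _ hβ.ne',
      Real.rpow_two]
  have hconformal_factor : |s| ^ (2 * β - 2) = (β * r) ^ 2 / s ^ 2 := by
    rw [abs_of_pos hs_pos, Real.rpow_sub hs_pos, hs_rpow, Real.rpow_two]
  rw [hconformal_factor]
  field_simp
end

section
/- Let (X, d) be a geodesic metric space (every pair of points is joined by a path γ with dist(γ(s),γ(t)) = |s−t|), and let μ be a Borel measure on X which is finite and positive on all open balls and doubling: there is C_D ≥ 1 with μ(B(x,2r)) ≤ C_D · μ(B(x,r)) for all x and r > 0. Fix r₀ > 0, C₀ > 0 and R > 0. Then there exists a constant c > 0, depending only on C_D, C₀, r₀ and R, with the following property: whenever f : X → ℝ is integrable on balls and g : X → [0,∞) is square-integrable on balls and the pair (f,g) satisfies the (1,2)-Poincaré inequality at small scales, i.e., ⨍_{B(x,r)} |f − f_{B(x,r)}| dμ ≤ C₀ · r · ( ⨍_{B(x,2r)} g² dμ )^{1/2} for every x ∈ X and every 0 < r ≤ r₀, then for every x ∈ X and every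 0 < r ≤ R one has ⨍_{B(x,r)} |f − f_{B(x,r)}| dμ ≤ c · r · ( ⨍_{B(x,2r)} g² dμ )^{1/2}. -/
/-!
For `r ≤ r₀` the small-scale inequality applies directly. For `r₀ < r ≤ R`, doubling makes every
ball of radius `≈ r₀` centred in `closedBall x r` comparable in measure to `B(x, 2r)`, with a
constant `K = C_D ^ m` depending only on `R / r₀`. Hence a maximal separated subset of `B(x, r)`
has at most `K` points, and the balls `B(z, ρ)`, `ρ = r₀ / 2`, around it cover `B(x, r)`. A
geodesic from `x` to `z`, cut into `M ≈ R / r₀` steps of length `ρ / 2`, gives a chain of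
overlapping small balls along which consecutive averages differ by `O(K · C₀ ρ √K G)`, where
`G² = ⨍_{B(x,2r)} g²`. So `∫_{B(z,ρ)} |f - f_{B(x,ρ)}|` is `O(μ B(x,2r) · M K² C₀ ρ √K G)`;
summing over the cover and applying doubling once more bounds the mean oscillation on `B(x, r)`
by `c · r · G`.
-/

open MeasureTheory Metric Set
open scoped ENNReal NNReal

section Average

variable {α : Type*} [MeasurableSpace α] {μ : Measure α} {s t u : Set α}

noncomputable def meanOscillation (μ : Measure α) (f : α → ℝ) (s : Set α) : ℝ :=
  ⨍ y in s, |f y - ⨍ z in s, f z ∂μ| ∂μ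

theorem setAverage_nonneg {h : α → ℝ} (h0 : ∀ y, 0 ≤ h y) : 0 ≤ ⨍ y in s, h y ∂μ :=
  integral_nonneg h0

theorem meanOscillation_nonneg (f : α → ℝ) : 0 ≤ meanOscillation μ f s :=
  setAverage_nonneg fun _ => abs_nonneg _

theorem measureReal_le_mul_of_le_ofReal_mul {K : ℝ} (hK : 0 ≤ K) (hs : μ s ≠ ∞)
    (h : μ t ≤ ENNReal.ofReal K * μ s) : μ.real t ≤ K * μ.real s := by
  simpa [measureReal_def, ENNReal.toReal_mul, ENNReal.toReal_ofReal hK] using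
    ENNReal.toReal_mono (by finiteness) h

theorem setAverage_le_mul_setAverage_of_subset {h : α → ℝ} {K : ℝ} (hst : s ⊆ t)
    (h0 : ∀ y, 0 ≤ h y) (hint : IntegrableOn h t μ) (hs : μ s ≠ 0) (ht : μ t ≠ ∞) (hK : 0 ≤ K)
    (hμ : μ t ≤ ENNReal.ofReal K * μ s) :
    ⨍ y in s, h y ∂μ ≤ K * ⨍ y in t, h y ∂μ := by
  have hs_fin : μ s ≠ ∞ := (measure_lt_top_of_subset hst ht).ne
  have hμ_real := measureReal_le_mul_of_le_ofReal_mul hK hs_fin hμ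
  have hs_pos : 0 < μ.real s := ENNReal.toReal_pos hs hs_fin
  calc ⨍ y in s, h y ∂μ = (μ.real s)⁻¹ * ∫ y in s, h y ∂μ := setAverage_eq μ h s
    _ ≤ (μ.real s)⁻¹ * ∫ y in t, h y ∂μ := by
      refine mul_le_mul_of_nonneg_left ?_ (by positivity)
      exact setIntegral_mono_set hint (.of_forall h0) hst.eventuallyLE
    _ = (μ.real s)⁻¹ * (μ.real t * ⨍ y in t, h y ∂μ) := by
      rw [← smul_eq_mul (a := μ.real t), measure_smul_setAverage _ ht]
    _ ≤ (μ.real s)⁻¹ * (K * μ.real s * ⨍ y in t, h y ∂μ) := by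
      gcongr
      exact setAverage_nonneg h0
    _ = K * ⨍ y in t, h y ∂μ := by field_simp

theorem setAverage_sq_rpow_half_le_of_subset {g : α → ℝ} {K : ℝ} (hus : u ⊆ s)
    (hint : IntegrableOn (fun y => g y ^ 2) s μ) (hu : μ u ≠ 0) (hs : μ s ≠ ∞) (hK : 0 ≤ K)
    (hμ : μ s ≤ ENNReal.ofReal K * μ u) :
    (⨍ y in u, g y ^ 2 ∂μ) ^ (1 / 2 : ℝ) ≤ √K * (⨍ y in s, g y ^ 2 ∂μ) ^ (1 / 2 : ℝ) := by
  rw [Real.sqrt_eq_rpow, ← Real.mul_rpow hK (setAverage_nonneg fun _ => sq_nonneg _)]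
  exact Real.rpow_le_rpow (setAverage_nonneg fun _ => sq_nonneg _)
    (setAverage_le_mul_setAverage_of_subset hus (fun _ => sq_nonneg _) hint hu hs hK hμ)
    (by norm_num)

variable {f : α → ℝ}

theorem setAverage_sub_const (hs : μ s ≠ 0) (hs' : μ s ≠ ∞) (hf : IntegrableOn f s μ) (a : ℝ) :
    ⨍ y in s, (f y - a) ∂μ = (⨍ y in s, f y ∂μ) - a := by
  have hs_pos : 0 < μ.real s := ENNReal.toReal_pos hs hs'
  rw [setAverage_eq, setAverage_eq, integral_sub hf (integrableOn_const hs'), setIntegral_const,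
    smul_eq_mul, smul_eq_mul, smul_eq_mul]
  field_simp

theorem abs_setAverage_sub_le (hs : μ s ≠ 0) (hs' : μ s ≠ ∞) (hf : IntegrableOn f s μ) (a : ℝ) :
    |(⨍ y in s, f y ∂μ) - a| ≤ ⨍ y in s, |f y - a| ∂μ := by
  rw [← setAverage_sub_const hs hs' hf]
  exact norm_integral_le_integral_norm (fun y => f y - a)

theorem setAverage_abs_sub_le_add (hs : μ s ≠ 0) (hs' : μ s ≠ ∞) (hf : IntegrableOn f s μ)
    (a b : ℝ) :
    ⨍ y in s, |f y - a| ∂μ ≤ (⨍ y in s, |f y - b| ∂μ) + |b - a| := by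
  have hfb : IntegrableOn (fun y => |f y - b|) s μ := (hf.sub (integrableOn_const hs')).abs
  calc ⨍ y in s, |f y - a| ∂μ ≤ ⨍ y in s, (|f y - b| + |b - a|) ∂μ :=
        integral_mono (hf.sub (integrableOn_const hs')).abs.to_average
          (hfb.add (integrableOn_const hs')).to_average fun y => abs_sub_le (f y) b a
    _ = (⨍ y in s, |f y - b| ∂μ) + |b - a| := by
        simpa only [sub_neg_eq_add] using setAverage_sub_const hs hs' hfb (-|b - a|)

theorem meanOscillation_le_two_mul (hs : μ s ≠ 0) (hs' : μ s ≠ ∞) (hf : IntegrableOn f s μ)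
    (a : ℝ) : meanOscillation μ f s ≤ 2 * ⨍ y in s, |f y - a| ∂μ := by
  calc meanOscillation μ f s ≤ (⨍ y in s, |f y - a| ∂μ) + |a - ⨍ y in s, f y ∂μ| :=
        setAverage_abs_sub_le_add hs hs' hf _ a
    _ ≤ (⨍ y in s, |f y - a| ∂μ) + ⨍ y in s, |f y - a| ∂μ := by
        rw [abs_sub_comm]; gcongr; exact abs_setAverage_sub_le hs hs' hf a
    _ = 2 * ⨍ y in s, |f y - a| ∂μ := by ring

theorem abs_setAverage_sub_setAverage_le_of_subset {K : ℝ} (hus : u ⊆ s) (hu : μ u ≠ 0)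
    (hs : μ s ≠ ∞) (hK : 0 ≤ K) (hμ : μ s ≤ ENNReal.ofReal K * μ u) (hf : IntegrableOn f s μ) :
    |(⨍ y in u, f y ∂μ) - ⨍ y in s, f y ∂μ| ≤ K * meanOscillation μ f s :=
  (abs_setAverage_sub_le hu (measure_lt_top_of_subset hus hs).ne (hf.mono_set hus) _).trans <|
    setAverage_le_mul_setAverage_of_subset hus (fun _ => abs_nonneg _)
      (hf.sub (integrableOn_const hs)).abs hu hs hK hμ

theorem abs_setAverage_sub_setAverage_le {K : ℝ} (hus : u ⊆ s) (hut : u ⊆ t) (hu : μ u ≠ 0)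
    (hs : μ s ≠ ∞) (ht : μ t ≠ ∞) (hK : 0 ≤ K) (hμs : μ s ≤ ENNReal.ofReal K * μ u)
    (hμt : μ t ≤ ENNReal.ofReal K * μ u) (hfs : IntegrableOn f s μ) (hft : IntegrableOn f t μ) :
    |(⨍ y in s, f y ∂μ) - ⨍ y in t, f y ∂μ| ≤
      K * (meanOscillation μ f s + meanOscillation μ f t) := by
  have hs' := abs_setAverage_sub_setAverage_le_of_subset hus hu hs hK hμs hfs
  have ht' := abs_setAverage_sub_setAverage_le_of_subset hut hu ht hK hμt hft
  rw [abs_sub_comm] at hs'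
  linarith [abs_sub_le (⨍ y in s, f y ∂μ) (⨍ y in u, f y ∂μ) (⨍ y in t, f y ∂μ)]

end Average

theorem MeasureTheory.Measure.restrict_le_sum_restrict_of_subset_biUnion {α ι : Type*}
    [MeasurableSpace α] {μ : Measure α} {S : Set α} {s : Finset ι} {T : ι → Set α} (hS : S ⊆ ⋃ i ∈ s, T i) :
    μ.restrict S ≤ ∑ i ∈ s, μ.restrict (T i) := by
  refine Measure.le_iff.2 fun t ht => ?_
  simp only [Measure.coe_finsetSum, Finset.sum_apply, Measure.restrict_apply ht]
  calc μ (t ∩ S) ≤ μ (⋃ i ∈ s, t ∩ T i) := by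
        rw [← inter_iUnion₂]; exact measure_mono (inter_subset_inter_right _ hS)
    _ ≤ ∑ i ∈ s, μ (t ∩ T i) := measure_biUnion_finset_le _ _

theorem setIntegral_le_sum_setIntegral_of_subset_biUnion {α ι : Type*} [MeasurableSpace α]
    {μ : Measure α} {S : Set α} {s : Finset ι} {T : ι → Set α} (hS : S ⊆ ⋃ i ∈ s, T i)
    {h : α → ℝ} (h0 : ∀ y, 0 ≤ h y) (hint : ∀ i ∈ s, IntegrableOn h (T i) μ) :
    ∫ y in S, h y ∂μ ≤ ∑ i ∈ s, ∫ y in T i, h y ∂μ := by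
  rw [← integral_finsetSum_measure hint]
  exact integral_mono_measure (Measure.restrict_le_sum_restrict_of_subset_biUnion hS)
    (.of_forall h0) (integrable_finsetSum_measure.2 hint)

section Doubling

variable {X : Type*} [PseudoMetricSpace X] [MeasurableSpace X] {μ : Measure X}

def IsDoublingWith (μ : Measure X) (C : ℝ) : Prop :=
  ∀ (x : X) (r : ℝ), 0 < r → μ (ball x (2 * r)) ≤ ENNReal.ofReal C * μ (ball x r)

theorem IsDoublingWith.measure_ball_two_pow_mul_le {C : ℝ} (h : IsDoublingWith μ C) (hC : 0 ≤ C)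
    (x : X) {s : ℝ} (hs : 0 < s) (m : ℕ) :
    μ (ball x (2 ^ m * s)) ≤ ENNReal.ofReal (C ^ m) * μ (ball x s) := by
  induction m with
  | zero => simp
  | succ m ih =>
    calc μ (ball x (2 ^ (m + 1) * s)) = μ (ball x (2 * (2 ^ m * s))) := by ring_nf
      _ ≤ ENNReal.ofReal C * μ (ball x (2 ^ m * s)) := h x _ (by positivity)
      _ ≤ ENNReal.ofReal C * (ENNReal.ofReal (C ^ m) * μ (ball x s)) := by gcongr
      _ = ENNReal.ofReal (C ^ (m + 1)) * μ (ball x s) := by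
        rw [← mul_assoc, ← ENNReal.ofReal_mul hC, pow_succ']

theorem IsDoublingWith.measure_ball_le_pow_mul {C : ℝ} (h : IsDoublingWith μ C) (hC : 0 ≤ C)
    {p q : X} {t s : ℝ} (hs : 0 < s) {m : ℕ} (hts : t + dist p q ≤ 2 ^ m * s) :
    μ (ball p t) ≤ ENNReal.ofReal (C ^ m) * μ (ball q s) :=
  (measure_mono (ball_subset_ball' hts)).trans (h.measure_ball_two_pow_mul_le hC q hs m)

end Doubling

section Geodesic

variable {X : Type*} [PseudoMetricSpace X]

def IsGeodesicSpace (X : Type*) [PseudoMetricSpace X] : Prop :=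
  ∀ x y : X, ∃ γ : ℝ → X, γ 0 = x ∧ γ (dist x y) = y ∧
    ∀ s ∈ Icc (0 : ℝ) (dist x y), ∀ t ∈ Icc (0 : ℝ) (dist x y), dist (γ s) (γ t) = |s - t|

theorem IsGeodesicSpace.exists_chain (h : IsGeodesicSpace X) (x z : X) {δ : ℝ} (hδ : 0 ≤ δ)
    {M : ℕ} (hM : dist x z ≤ M * δ) :
    ∃ y : ℕ → X, y 0 = x ∧ y M = z ∧ (∀ j, dist x (y j) ≤ dist x z) ∧
      ∀ j, dist (y j) (y (j + 1)) ≤ δ := by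
  obtain ⟨γ, hγ0, hγz, hγ⟩ := h x z
  set L := dist x z
  have hmem : ∀ j : ℕ, min (j * δ) L ∈ Icc 0 L := fun j =>
    ⟨le_min (by positivity) dist_nonneg, min_le_right _ _⟩
  refine ⟨fun j => γ (min (j * δ) L), by simpa [L] using hγ0, by simpa [min_eq_right hM] using hγz,
    fun j => ?_, fun j => ?_⟩
  · rw [← hγ0, hγ 0 ⟨le_rfl, dist_nonneg⟩ _ (hmem j), zero_sub, abs_neg, abs_of_nonneg (hmem j).1]
    exact (hmem j).2
  · rw [hγ _ (hmem j) _ (hmem (j + 1))]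
    refine (abs_min_sub_min_le_max _ _ _ _).trans ?_
    simp [← sub_mul, abs_of_nonneg hδ, hδ]

end Geodesic

section Packing

variable {X : Type*} [PseudoMetricSpace X] [MeasurableSpace X] [OpensMeasurableSpace X]
  {μ : Measure X}

theorem card_le_of_pairwiseDisjoint_ball {s : Finset X} {T : Set X} {δ K : ℝ} (hK : 0 ≤ K)
    (hdisj : (s : Set X).PairwiseDisjoint (fun p => ball p δ)) (hT : μ T ≠ 0) (hT' : μ T ≠ ∞)
    (hsub : ∀ p ∈ s, ball p δ ⊆ T) (hμ : ∀ p ∈ s, μ T ≤ ENNReal.ofReal K * μ (ball p δ)) :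
    (s.card : ℝ) ≤ K := by
  have key : (s.card : ℝ≥0∞) * μ T ≤ ENNReal.ofReal K * μ T :=
    calc (s.card : ℝ≥0∞) * μ T = ∑ p ∈ s, μ T := by simp
      _ ≤ ∑ p ∈ s, ENNReal.ofReal K * μ (ball p δ) := Finset.sum_le_sum hμ
      _ = ENNReal.ofReal K * μ (⋃ p ∈ s, ball p δ) := by
        rw [measure_biUnion_finset hdisj fun _ _ => measurableSet_ball, Finset.mul_sum]
      _ ≤ ENNReal.ofReal K * μ T := by gcongr; exact iUnion₂_subset hsub
  rwa [ENNReal.mul_le_mul_iff_left hT hT', ← ENNReal.ofReal_natCast,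
    ENNReal.ofReal_le_ofReal_iff hK] at key

theorem exists_finset_subset_iUnion_ball {A T : Set X} {δ K : ℝ} (hδ : 0 < δ) (hK : 0 ≤ K)
    (hT : μ T ≠ 0) (hT' : μ T ≠ ∞)
    (hA : ∀ p ∈ A, ball p (δ / 4) ⊆ T ∧ μ T ≤ ENNReal.ofReal K * μ (ball p (δ / 4))) :
    ∃ s : Finset X, ↑s ⊆ A ∧ (s.card : ℝ) ≤ K ∧ A ⊆ ⋃ z ∈ s, ball z δ := by
  set ε : ℝ≥0 := ⟨δ / 2, by positivity⟩
  have hcard : ∀ C ⊆ A, IsSeparated (ε : ℝ≥0∞) C → ∀ t : Finset X, ↑t ⊆ C →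
      (t.card : ℝ) ≤ K := by
    refine fun C hCA hC t htC => card_le_of_pairwiseDisjoint_ball hK (fun p hp q hq hpq => ?_)
      hT hT' (fun p hp => (hA p (hCA (htC hp))).1) (fun p hp => (hA p (hCA (htC hp))).2)
    refine ball_disjoint_ball ?_
    have hsep : (ε : ℝ≥0∞) < edist p q := hC (htC hp) (htC hq) hpq
    rw [edist_nndist, ENNReal.coe_lt_coe, ← NNReal.coe_lt_coe, coe_nndist] at hsep
    linarith [show (ε : ℝ) = δ / 2 from rfl]
  have hpack : packingNumber ε A ≤ ⌊K⌋₊ := by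
    refine iSup₂_le fun C hCA => iSup_le fun hC => ?_
    by_contra hlt
    obtain ⟨t, htC, ht⟩ := exists_subset_encard_eq (Order.add_one_le_of_lt (not_le.1 hlt))
    have htfin : t.Finite := finite_of_encard_eq_coe (k := ⌊K⌋₊ + 1) (by simpa using ht)
    have htcard : (htfin.toFinset.card : ℝ) = ⌊K⌋₊ + 1 := by
      rw [htfin.encard_eq_coe_toFinset_card] at ht; exact_mod_cast ht
    linarith [Nat.lt_floor_add_one K, hcard C hCA hC htfin.toFinset (by simpa using htC)]
  have hfin : packingNumber ε A ≠ ⊤ := ne_top_of_le_ne_top (ENat.natCast_ne_top _) hpack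
  have hNfin : (maximalSeparatedSet ε A).Finite :=
    finite_of_encard_le_coe ((encard_maximalSeparatedSet hfin).trans_le hpack)
  refine ⟨hNfin.toFinset, by simpa using maximalSeparatedSet_subset,
    hcard _ maximalSeparatedSet_subset isSeparated_maximalSeparatedSet _ (by simp), fun y hy => ?_⟩
  obtain ⟨z, hz, hyz⟩ :=
    mem_iUnion₂.1 ((isCover_maximalSeparatedSet hfin).subset_iUnion_closedBall hy)
  exact mem_iUnion₂.2
    ⟨z, by simpa using hz, closedBall_subset_ball (by change δ / 2 < δ; linarith) hyz⟩

end Packing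

section Propagation

variable {X : Type*} [PseudoMetricSpace X] [MeasurableSpace X] {μ : Measure X} {f : X → ℝ}
  {x : X} {r ρ K P : ℝ} {M : ℕ}

theorem abs_setAverage_ball_sub_le_of_isGeodesicSpace (hgeo : IsGeodesicSpace X)
    (hfin : ∀ (x : X) (r : ℝ), 0 < r → μ (ball x r) < ⊤)
    (hpos : ∀ (x : X) (r : ℝ), 0 < r → 0 < μ (ball x r))
    (hf : ∀ (x : X) (r : ℝ), 0 < r → IntegrableOn f (ball x r) μ)
    (hρ : 0 < ρ) (h2ρ : 2 * ρ ≤ r) (hK : 0 ≤ K)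
    (hcomp : ∀ p, dist x p ≤ r → μ (ball x (2 * r)) ≤ ENNReal.ofReal K * μ (ball p (ρ / 4)))
    (hosc : ∀ p, dist x p ≤ r → meanOscillation μ f (ball p ρ) ≤ P)
    (hM : r ≤ M * (ρ / 2)) {z : X} (hz : dist x z < r) :
    |(⨍ y in ball x ρ, f y ∂μ) - ⨍ y in ball z ρ, f y ∂μ| ≤ M * (2 * K * P) := by
  obtain ⟨y, hy0, hyM, hyx, hystep⟩ := hgeo.exists_chain x z (by positivity) (hz.le.trans hM)
  have hyr : ∀ j, dist x (y j) ≤ r := fun j => (hyx j).trans hz.le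
  have hstep : ∀ j, dist (⨍ w in ball (y j) ρ, f w ∂μ) (⨍ w in ball (y (j + 1)) ρ, f w ∂μ) ≤
      2 * K * P := by
    intro j
    have hcomp' : ∀ p, dist x p ≤ r →
        μ (ball p ρ) ≤ ENNReal.ofReal K * μ (ball (y (j + 1)) (ρ / 2)) := by
      intro p hp
      calc μ (ball p ρ) ≤ μ (ball x (2 * r)) :=
            measure_mono (ball_subset_ball' (by rw [dist_comm]; linarith))
        _ ≤ ENNReal.ofReal K * μ (ball (y (j + 1)) (ρ / 4)) := hcomp _ (hyr _)
        _ ≤ ENNReal.ofReal K * μ (ball (y (j + 1)) (ρ / 2)) := by gcongr; linarith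
    calc dist (⨍ w in ball (y j) ρ, f w ∂μ) (⨍ w in ball (y (j + 1)) ρ, f w ∂μ)
        ≤ K * (meanOscillation μ f (ball (y j) ρ) + meanOscillation μ f (ball (y (j + 1)) ρ)) :=
          abs_setAverage_sub_setAverage_le
            (ball_subset_ball' (by linarith [hystep j, dist_comm (y j) (y (j + 1))]))
            (ball_subset_ball (by linarith)) (hpos _ _ (by positivity)).ne' (hfin _ _ hρ).ne
            (hfin _ _ hρ).ne hK (hcomp' _ (hyr j)) (hcomp' _ (hyr (j + 1))) (hf _ _ hρ) (hf _ _ hρ)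
      _ ≤ K * (P + P) := by gcongr <;> exact hosc _ (hyr _)
      _ = 2 * K * P := by ring
  simpa [hy0, hyM, Real.dist_eq] using
    dist_le_range_sum_of_dist_le (f := fun j => ⨍ w in ball (y j) ρ, f w ∂μ) M fun _ => hstep _

theorem setIntegral_abs_sub_setAverage_ball_le [OpensMeasurableSpace X] (hgeo : IsGeodesicSpace X)
    (hfin : ∀ (x : X) (r : ℝ), 0 < r → μ (ball x r) < ⊤)
    (hpos : ∀ (x : X) (r : ℝ), 0 < r → 0 < μ (ball x r))
    (hf : ∀ (x : X) (r : ℝ), 0 < r → IntegrableOn f (ball x r) μ)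
    (hρ : 0 < ρ) (h2ρ : 2 * ρ ≤ r) (hK : 0 ≤ K)
    (hcomp : ∀ p, dist x p ≤ r → μ (ball x (2 * r)) ≤ ENNReal.ofReal K * μ (ball p (ρ / 4)))
    (hosc : ∀ p, dist x p ≤ r → meanOscillation μ f (ball p ρ) ≤ P)
    (hM : r ≤ M * (ρ / 2)) :
    ∫ y in ball x r, |f y - ⨍ w in ball x ρ, f w ∂μ| ∂μ ≤
      K * (μ.real (ball x (2 * r)) * ((1 + 2 * M * K) * P)) := by
  set A := ⨍ w in ball x ρ, f w ∂μ
  have hr : 0 < r := by linarith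
  have hP : 0 ≤ P := (meanOscillation_nonneg f).trans (hosc x (by simpa using hr.le))
  have hsub : ∀ p, dist x p ≤ r → ∀ t ≤ r, ball p t ⊆ ball x (2 * r) := fun p hp t ht =>
    ball_subset_ball' (by rw [dist_comm]; linarith)
  obtain ⟨s, hsA, hsK, hcover⟩ := exists_finset_subset_iUnion_ball hρ hK
    (hpos x _ (by positivity)).ne' (hfin x _ (by positivity)).ne fun p hp =>
      ⟨hsub p (mem_ball'.1 hp).le _ (by linarith), hcomp p (mem_ball'.1 hp).le⟩
  have hball : ∀ z ∈ s, ∫ y in ball z ρ, |f y - A| ∂μ ≤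
      μ.real (ball x (2 * r)) * ((1 + 2 * M * K) * P) := by
    intro z hz
    have hxz : dist x z < r := mem_ball'.1 (hsA hz)
    calc ∫ y in ball z ρ, |f y - A| ∂μ = μ.real (ball z ρ) * ⨍ y in ball z ρ, |f y - A| ∂μ :=
          (measure_smul_setAverage _ (hfin z ρ hρ).ne).symm
      _ ≤ μ.real (ball x (2 * r)) *
          (meanOscillation μ f (ball z ρ) + |(⨍ y in ball z ρ, f y ∂μ) - A|) := by
        refine mul_le_mul
          (measureReal_mono (hsub z hxz.le ρ (by linarith)) (hfin _ _ (by positivity)).ne)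
          (setAverage_abs_sub_le_add (hpos z ρ hρ).ne' (hfin z ρ hρ).ne (hf z ρ hρ) _ _)
          (setAverage_nonneg fun _ => abs_nonneg _) measureReal_nonneg
      _ ≤ μ.real (ball x (2 * r)) * (P + M * (2 * K * P)) := by
        gcongr
        · exact hosc z hxz.le
        · rw [abs_sub_comm]
          exact abs_setAverage_ball_sub_le_of_isGeodesicSpace hgeo hfin hpos hf hρ h2ρ hK hcomp
            hosc hM hxz
      _ = μ.real (ball x (2 * r)) * ((1 + 2 * M * K) * P) := by ring
  calc ∫ y in ball x r, |f y - A| ∂μ ≤ ∑ z ∈ s, ∫ y in ball z ρ, |f y - A| ∂μ :=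
        setIntegral_le_sum_setIntegral_of_subset_biUnion hcover (fun _ => abs_nonneg _)
          fun z _ => (hf z ρ hρ |>.sub (integrableOn_const (hfin z ρ hρ).ne)).abs
    _ ≤ ∑ z ∈ s, μ.real (ball x (2 * r)) * ((1 + 2 * M * K) * P) := Finset.sum_le_sum hball
    _ = s.card * (μ.real (ball x (2 * r)) * ((1 + 2 * M * K) * P)) := by simp
    _ ≤ K * (μ.real (ball x (2 * r)) * ((1 + 2 * M * K) * P)) := by gcongr

theorem meanOscillation_ball_le_of_isGeodesicSpace [OpensMeasurableSpace X]
    (hgeo : IsGeodesicSpace X)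
    (hfin : ∀ (x : X) (r : ℝ), 0 < r → μ (ball x r) < ⊤)
    (hpos : ∀ (x : X) (r : ℝ), 0 < r → 0 < μ (ball x r))
    (hf : ∀ (x : X) (r : ℝ), 0 < r → IntegrableOn f (ball x r) μ)
    (hρ : 0 < ρ) (h2ρ : 2 * ρ ≤ r) (hK : 0 ≤ K)
    (hcomp : ∀ p, dist x p ≤ r → μ (ball x (2 * r)) ≤ ENNReal.ofReal K * μ (ball p (ρ / 4)))
    (hosc : ∀ p, dist x p ≤ r → meanOscillation μ f (ball p ρ) ≤ P)
    (hM : r ≤ M * (ρ / 2)) {C : ℝ} (hC : 0 ≤ C)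
    (hdoub : μ (ball x (2 * r)) ≤ ENNReal.ofReal C * μ (ball x r)) :
    meanOscillation μ f (ball x r) ≤ 2 * C * K * (1 + 2 * M * K) * P := by
  have hr : 0 < r := by linarith
  have hP : 0 ≤ P := (meanOscillation_nonneg f).trans (hosc x (by simpa using hr.le))
  have hB : 0 < μ.real (ball x r) := ENNReal.toReal_pos (hpos x r hr).ne' (hfin x r hr).ne
  have hdoub' := measureReal_le_mul_of_le_ofReal_mul hC (hfin x r hr).ne hdoub
  set A := ⨍ w in ball x ρ, f w ∂μ
  calc meanOscillation μ f (ball x r) ≤ 2 * ⨍ y in ball x r, |f y - A| ∂μ :=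
        meanOscillation_le_two_mul (hpos x r hr).ne' (hfin x r hr).ne (hf x r hr) A
    _ = 2 * ((μ.real (ball x r))⁻¹ * ∫ y in ball x r, |f y - A| ∂μ) := by
        rw [setAverage_eq, smul_eq_mul]
    _ ≤ 2 * ((μ.real (ball x r))⁻¹ * (K * (μ.real (ball x (2 * r)) * ((1 + 2 * M * K) * P)))) := by
        gcongr
        exact setIntegral_abs_sub_setAverage_ball_le hgeo hfin hpos hf hρ h2ρ hK hcomp hosc hM
    _ ≤ 2 * ((μ.real (ball x r))⁻¹ * (K * (C * μ.real (ball x r) * ((1 + 2 * M * K) * P)))) := by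
        gcongr
    _ = 2 * C * K * (1 + 2 * M * K) * P := by field_simp

end Propagation

theorem poincare_inequality_propagates_general
    {X : Type*} [MetricSpace X] [MeasurableSpace X] [BorelSpace X]
    (μ : Measure X)
    (hgeo : ∀ x y : X, ∃ γ : ℝ → X, γ 0 = x ∧ γ (dist x y) = y ∧
      ∀ s ∈ Icc (0 : ℝ) (dist x y), ∀ t ∈ Icc (0 : ℝ) (dist x y),
        dist (γ s) (γ t) = |s - t|)
    (hfin : ∀ (x : X) (r : ℝ), 0 < r → μ (ball x r) < ⊤)
    (hpos : ∀ (x : X) (r : ℝ), 0 < r → 0 < μ (ball x r))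
    (C_D : ℝ) (hCD : 1 ≤ C_D)
    (hdoub : ∀ (x : X) (r : ℝ), 0 < r →
      μ (ball x (2 * r)) ≤ ENNReal.ofReal C_D * μ (ball x r))
    (r₀ C₀ R : ℝ) (hr₀ : 0 < r₀) (hC₀ : 0 < C₀) :
    ∃ c : ℝ, 0 < c ∧
      ∀ f g : X → ℝ,
        (∀ (x : X) (r : ℝ), 0 < r → IntegrableOn f (ball x r) μ) →
        (∀ x, 0 ≤ g x) →
        (∀ (x : X) (r : ℝ), 0 < r → IntegrableOn (fun y => (g y) ^ 2) (ball x r) μ) →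
        (∀ (x : X) (r : ℝ), 0 < r → r ≤ r₀ →
          (⨍ y in ball x r, |f y - ⨍ z in ball x r, f z ∂μ| ∂μ) ≤
            C₀ * r * (⨍ y in ball x (2 * r), (g y) ^ 2 ∂μ) ^ (1/2 : ℝ)) →
        ∀ (x : X) (r : ℝ), 0 < r → r ≤ R →
          (⨍ y in ball x r, |f y - ⨍ z in ball x r, f z ∂μ| ∂μ) ≤
            c * r * (⨍ y in ball x (2 * r), (g y) ^ 2 ∂μ) ^ (1/2 : ℝ) := by
  have hCD0 : 0 ≤ C_D := zero_le_one.trans hCD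
  -- `2 ^ m * r₀ / 8 ≥ 3 * R` makes each `B(p, r₀ / 8)`, `p ∈ closedBall x r`, comparable to
  -- `B(x, 2r)`; `M` steps of length `r₀ / 4` reach every point of `B(x, r)`.
  obtain ⟨m, hm⟩ : ∃ m : ℕ, 24 * R < 2 ^ m * r₀ :=
    (pow_unbounded_of_one_lt _ one_lt_two).imp fun _ h => (div_lt_iff₀ hr₀).1 h
  obtain ⟨M, hM⟩ : ∃ M : ℕ, 4 * R ≤ M * r₀ := (exists_nat_ge _).imp fun _ h => (div_le_iff₀ hr₀).1 h
  set K := C_D ^ m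
  have hK : 0 ≤ K := pow_nonneg hCD0 m
  set c := 2 * C_D * K * (1 + 2 * M * K) * (C₀ * √K)
  refine ⟨max C₀ c, lt_max_of_lt_left hC₀, fun f g hf _ hg2 hPI x r hr hrR => ?_⟩
  set G := (⨍ y in ball x (2 * r), g y ^ 2 ∂μ) ^ (1 / 2 : ℝ)
  have hG : 0 ≤ G := Real.rpow_nonneg (setAverage_nonneg fun _ => sq_nonneg _) _
  rcases le_or_gt r r₀ with hsmall | hlarge
  · calc _ ≤ C₀ * r * G := hPI x r hr hsmall
      _ ≤ max C₀ c * r * G := by gcongr; exact le_max_left _ _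
  have hcomp : ∀ p, dist x p ≤ r →
      μ (ball x (2 * r)) ≤ ENNReal.ofReal K * μ (ball p (r₀ / 2 / 4)) := fun p hp =>
    IsDoublingWith.measure_ball_le_pow_mul hdoub hCD0 (by positivity) (by linarith)
  have hosc : ∀ p, dist x p ≤ r →
      meanOscillation μ f (ball p (r₀ / 2)) ≤ C₀ * (r₀ / 2) * (√K * G) :=
    fun p hp => (hPI p _ (by positivity) (by linarith)).trans <| by
      gcongr
      exact setAverage_sq_rpow_half_le_of_subset (ball_subset_ball' (by rw [dist_comm]; linarith))
        (hg2 x _ (by positivity)) (hpos _ _ (by positivity)).ne' (hfin _ _ (by positivity)).ne hK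
        ((hcomp p hp).trans (by gcongr; linarith))
  calc _ ≤ 2 * C_D * K * (1 + 2 * M * K) * (C₀ * (r₀ / 2) * (√K * G)) :=
        meanOscillation_ball_le_of_isGeodesicSpace hgeo hfin hpos hf (by positivity) (by linarith)
          hK hcomp hosc (by linarith) hCD0 (hdoub x r hr)
    _ = c * (r₀ / 2) * G := by ring
    _ ≤ max C₀ c * r * G := by gcongr; exacts [le_max_right _ _, by linarith]

/-- In a geodesic metric space with a doubling measure that is finite and positive on
balls, a (1,2)-Poincaré inequality holding at scales `r ≤ r₀` propagates to all scales
`r ≤ R`, with a constant depending only on the doubling constant, the small-scale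
Poincaré constant, `r₀` and `R`. -/
theorem poincare_inequality_propagates
    {X : Type*} [MetricSpace X] [MeasurableSpace X] [BorelSpace X]
    (μ : Measure X)
    (hgeo : ∀ x y : X, ∃ γ : ℝ → X, γ 0 = x ∧ γ (dist x y) = y ∧
      ∀ s ∈ Icc (0 : ℝ) (dist x y), ∀ t ∈ Icc (0 : ℝ) (dist x y),
        dist (γ s) (γ t) = |s - t|)
    (hfin : ∀ (x : X) (r : ℝ), 0 < r → μ (ball x r) < ⊤)
    (hpos : ∀ (x : X) (r : ℝ), 0 < r → 0 < μ (ball x r))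
    (C_D : ℝ) (hCD : 1 ≤ C_D)
    (hdoub : ∀ (x : X) (r : ℝ), 0 < r →
      μ (ball x (2 * r)) ≤ ENNReal.ofReal C_D * μ (ball x r))
    (r₀ C₀ R : ℝ) (hr₀ : 0 < r₀) (hC₀ : 0 < C₀) (hR : 0 < R) :
    ∃ c : ℝ, 0 < c ∧
      ∀ f g : X → ℝ,
        (∀ (x : X) (r : ℝ), 0 < r → IntegrableOn f (ball x r) μ) →
        (∀ x, 0 ≤ g x) →
        (∀ (x : X) (r : ℝ), 0 < r → IntegrableOn (fun y => (g y) ^ 2) (ball x r) μ) →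
        (∀ (x : X) (r : ℝ), 0 < r → r ≤ r₀ →
          (⨍ y in ball x r, |f y - ⨍ z in ball x r, f z ∂μ| ∂μ) ≤
            C₀ * r * (⨍ y in ball x (2 * r), (g y) ^ 2 ∂μ) ^ (1/2 : ℝ)) →
        ∀ (x : X) (r : ℝ), 0 < r → r ≤ R →
          (⨍ y in ball x r, |f y - ⨍ z in ball x r, f z ∂μ| ∂μ) ≤
            c * r * (⨍ y in ball x (2 * r), (g y) ^ 2 ∂μ) ^ (1/2 : ℝ) :=
  poincare_inequality_propagates_general μ hgeo hfin hpos C_D hCD hdoub r₀ C₀ R hr₀ hC₀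
end
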